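/- Let p ≥ 1 and Ψ(x) = √(2x (LLx)^p). Then Ψ⁻¹(x) ~ x²/(2(LLx)^p) as x → ∞, i.e., lim_{x→∞} Ψ⁻¹(x)·2(LLx)^p/x² = 1. -/
import Mathlib


open Filter Set

theorem stmt_10 (p : ℝ) (hp : 1 ≤ p)
    (LL : ℝ → ℝ)
    (hLL : ∀ x, LL x = Real.log (Real.log (max (Real.exp (Real.exp 1)) x)))
    (Ψ Ψinv : ℝ → ℝ) (hΨ : ∀ x, Ψ x = Real.sqrt (2 * x * (LL x) ^ p))
    (hinv₁ : ∀ x ≥ (0 : ℝ), Ψinv (Ψ x) = x)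
    (hinv₂ : ∀ y ≥ (0 : ℝ), Ψ (Ψinv y) = y) :
    Tendsto (fun x => Ψinv x * (2 * (LL x) ^ p) / x ^ 2) atTop (nhds 1) := by
  have hp0 : (0:ℝ) ≤ p := le_trans zero_le_one hp
  have hppos : (0:ℝ) < p := lt_of_lt_of_le one_pos hp
  -- LL ≥ 1 everywhere
  have hLL1 : ∀ x, 1 ≤ LL x := by
    intro x
    rw [hLL]
    have h1 : Real.exp 1 ≤ Real.log (max (Real.exp (Real.exp 1)) x) := by
      calc Real.exp 1 = Real.log (Real.exp (Real.exp 1)) := (Real.log_exp _).symm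
      _ ≤ _ := Real.log_le_log (Real.exp_pos _) (le_max_left _ _)
    calc (1:ℝ) = Real.log (Real.exp 1) := (Real.log_exp 1).symm
    _ ≤ _ := Real.log_le_log (Real.exp_pos _) h1
  -- LL monotone
  have hLLmono : Monotone LL := by
    intro a b hab
    rw [hLL, hLL]
    have h0 : (0:ℝ) < max (Real.exp (Real.exp 1)) a := lt_of_lt_of_le (Real.exp_pos _) (le_max_left _ _)
    have h1 : max (Real.exp (Real.exp 1)) a ≤ max (Real.exp (Real.exp 1)) b :=
      max_le_max le_rfl hab
    have he : Real.exp 1 ≤ Real.log (max (Real.exp (Real.exp 1)) a) := by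
      calc Real.exp 1 = Real.log (Real.exp (Real.exp 1)) := (Real.log_exp _).symm
      _ ≤ _ := Real.log_le_log (Real.exp_pos _) (le_max_left _ _)
    have h2 : (0:ℝ) < Real.log (max (Real.exp (Real.exp 1)) a) :=
      lt_of_lt_of_le (Real.exp_pos _) he
    exact Real.log_le_log h2 (Real.log_le_log h0 h1)
  -- key identity
  have key : ∀ y : ℝ, 0 < y → 0 < Ψinv y ∧ 2 * Ψinv y * LL (Ψinv y) ^ p = y ^ 2 := by
    intro y hy
    have h := hinv₂ y hy.le
    rw [hΨ] at h
    set u := Ψinv y with hu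
    have harg : 0 ≤ 2 * u * LL u ^ p := by
      by_contra hneg
      push_neg at hneg
      rw [Real.sqrt_eq_zero_of_nonpos hneg.le] at h
      exact absurd h.symm hy.ne'
    have hsq : 2 * u * LL u ^ p = y ^ 2 := by
      rw [← h, Real.sq_sqrt harg]
    have hLLp : 0 < LL u ^ p :=
      Real.rpow_pos_of_pos (lt_of_lt_of_le one_pos (hLL1 u)) p
    have hupos : 0 < u := by nlinarith [sq_nonneg y, hy]
    exact ⟨hupos, hsq⟩
  -- LL tends to infinity
  have hLLtop : Tendsto LL atTop atTop := by
    have h1 : Tendsto (fun y : ℝ => Real.log (Real.log y)) atTop atTop :=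
      Real.tendsto_log_atTop.comp Real.tendsto_log_atTop
    apply h1.congr'
    filter_upwards [eventually_ge_atTop (Real.exp (Real.exp 1))] with y hy
    rw [hLL, max_eq_right hy]
  -- lower bound function tends to 1
  have hlb : Tendsto (fun y => LL y / (Real.log 2 + LL y)) atTop (nhds 1) := by
    have h0 : Tendsto (fun y => Real.log 2 / LL y + 1) atTop (nhds 1) := by
      have h1 : Tendsto (fun y => Real.log 2 / LL y) atTop (nhds 0) :=
        Tendsto.div_atTop tendsto_const_nhds hLLtop
      simpa using h1.add (tendsto_const_nhds (x := (1:ℝ)))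
    have h2 : Tendsto (fun y => (Real.log 2 / LL y + 1)⁻¹) atTop (nhds 1) := by
      simpa using h0.inv₀ one_ne_zero
    apply h2.congr
    intro y
    have hL : (0:ℝ) < LL y := lt_of_lt_of_le one_pos (hLL1 y)
    have hd : (0:ℝ) < Real.log 2 + LL y := by
      have := Real.log_nonneg (by norm_num : (1:ℝ) ≤ 2); linarith
    have hd2 : (0:ℝ) < Real.log 2 / LL y + 1 := by positivity
    rw [inv_eq_one_div, div_eq_div_iff hd2.ne' hd.ne']
    field_simp
  -- eventual bound from little-o
  have hev1 : ∀ᶠ y in atTop, 2 * Real.log y ≤ y ^ (1 / (2 * p)) := by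
    have hr : (0:ℝ) < 1 / (2 * p) := by positivity
    have hO := isLittleO_log_rpow_atTop hr
    have hb := hO.def (show (0:ℝ) < 1/2 by norm_num)
    filter_upwards [hb, eventually_ge_atTop (1:ℝ)] with y h hy1
    rw [Real.norm_eq_abs, Real.norm_eq_abs, abs_of_nonneg (Real.log_nonneg hy1),
      abs_of_nonneg (Real.rpow_nonneg (by linarith) _)] at h
    linarith
  -- the main eventual facts
  have hmain : ∀ᶠ y in atTop,
      (LL y / (Real.log 2 + LL y) ≤ LL y / LL (Ψinv y) ∧ LL y / LL (Ψinv y) ≤ 1)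
      ∧ Ψinv y * (2 * LL y ^ p) / y ^ 2 = (LL y / LL (Ψinv y)) ^ p := by
    filter_upwards [hev1, eventually_ge_atTop (max 4 (Real.exp (Real.exp 1)))] with y hlog hy
    have hy4 : (4:ℝ) ≤ y := le_trans (le_max_left _ _) hy
    have hye : Real.exp (Real.exp 1) ≤ y := le_trans (le_max_right _ _) hy
    have hy1 : (1:ℝ) ≤ y := by linarith
    have hy0 : (0:ℝ) < y := by linarith
    obtain ⟨hu, hequ⟩ := key y hy0
    set u := Ψinv y with hudef
    have hLLu1 : 1 ≤ LL u := hLL1 u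
    have hLLu0 : (0:ℝ) < LL u := lt_of_lt_of_le one_pos hLLu1
    have hLLy0 : (0:ℝ) < LL y := lt_of_lt_of_le one_pos (hLL1 y)
    have hLLup1 : (1:ℝ) ≤ LL u ^ p := by
      calc (1:ℝ) = 1 ^ p := (Real.one_rpow p).symm
      _ ≤ LL u ^ p := Real.rpow_le_rpow zero_le_one hLLu1 hp0
    have hLLup0 : (0:ℝ) < LL u ^ p := lt_of_lt_of_le one_pos hLLup1
    -- u ≤ y^2
    have hule : u ≤ y ^ 2 := by nlinarith
    -- compute LL y and LL (y^2)
    have hLLy_eq : LL y = Real.log (Real.log y) := by rw [hLL, max_eq_right hye]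
    have hy2e : Real.exp (Real.exp 1) ≤ y ^ 2 := by nlinarith
    have hlogy0 : (0:ℝ) < Real.log y := Real.log_pos (by linarith)
    have hLLy2_eq : LL (y ^ 2) = Real.log 2 + Real.log (Real.log y) := by
      rw [hLL, max_eq_right hy2e, Real.log_pow]
      push_cast
      rw [Real.log_mul (by norm_num) hlogy0.ne']
    -- 2 * LL u ^ p ≤ y
    have hLLu_le : LL u ≤ Real.log 2 + Real.log (Real.log y) := by
      calc LL u ≤ LL (y ^ 2) := hLLmono hule
      _ = _ := hLLy2_eq
    have hlog2_le : Real.log 2 ≤ Real.log y :=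
      Real.log_le_log (by norm_num) (by linarith)
    have hloglog_le : Real.log (Real.log y) ≤ Real.log y :=
      Real.log_le_self hlogy0.le
    have hLLu_le2 : LL u ≤ 2 * Real.log y := by linarith
    have hr12 : ((4:ℝ)) ^ ((1:ℝ)/2) = 2 := by
      rw [show (4:ℝ) = 2 ^ (2:ℕ) by norm_num, ← Real.rpow_natCast 2 2,
        ← Real.rpow_mul (by norm_num)]
      norm_num
    have hy12_ge : (2:ℝ) ≤ y ^ ((1:ℝ)/2) := by
      calc (2:ℝ) = (4:ℝ) ^ ((1:ℝ)/2) := hr12.symm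
      _ ≤ y ^ ((1:ℝ)/2) := Real.rpow_le_rpow (by norm_num) hy4 (by norm_num)
    have hyp_half : (y ^ (1/(2*p))) ^ p = y ^ ((1:ℝ)/2) := by
      rw [← Real.rpow_mul hy0.le]
      congr 1
      field_simp
    have h2LLu : 2 * LL u ^ p ≤ y := by
      have h1 : LL u ^ p ≤ (y ^ (1/(2*p))) ^ p :=
        Real.rpow_le_rpow hLLu0.le (le_trans hLLu_le2 hlog) hp0
      have h2 : LL u ^ p ≤ y ^ ((1:ℝ)/2) := by rwa [hyp_half] at h1
      have h3 : y ^ ((1:ℝ)/2) * y ^ ((1:ℝ)/2) = y := by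
        rw [← Real.rpow_add hy0]; norm_num
      nlinarith [Real.rpow_nonneg hy0.le ((1:ℝ)/2)]
    -- y ≤ u
    have huge : y ≤ u := by nlinarith
    have hLLyu : LL y ≤ LL u := hLLmono huge
    constructor
    · constructor
      · apply div_le_div_of_nonneg_left hLLy0.le hLLu0
        calc LL u ≤ Real.log 2 + Real.log (Real.log y) := hLLu_le
        _ = Real.log 2 + LL y := by rw [hLLy_eq]
      · exact div_le_one_of_le₀ hLLyu hLLu0.le
    · have hy2 : y ^ 2 = 2 * u * LL u ^ p := hequ.symm
      rw [hy2, Real.div_rpow hLLy0.le hLLu0.le]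
      field_simp
  -- assemble
  have hg : Tendsto (fun y => LL y / LL (Ψinv y)) atTop (nhds 1) :=
    tendsto_of_tendsto_of_tendsto_of_le_of_le' hlb tendsto_const_nhds
      (hmain.mono fun y h => h.1.1) (hmain.mono fun y h => h.1.2)
  have hgp : Tendsto (fun y => (LL y / LL (Ψinv y)) ^ p) atTop (nhds 1) := by
    have h1 : Tendsto (fun y => (LL y / LL (Ψinv y)) ^ p) atTop (nhds ((1:ℝ) ^ p)) :=
      hg.rpow_const (Or.inl one_ne_zero)
    simpa using h1
  exact Tendsto.congr' (hmain.mono fun y h => h.2.symm) hgp
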